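/- Let G be a group and let B0, B1, B2, C, d1, d2, φ be elements of G satisfying: (i) d1 * d2 = (B0 * B1 * B2 * C)^2; (ii) d1 commutes with B1; (iii) φ * d1 * φ⁻¹ = B1 and φ * B2 * φ⁻¹ = d2. Then the element (B2⁻¹ * B1⁻¹ * B0 * B1 * B2) * C * B0 * B1 * B2 * C lies in the commutator subgroup of G; in fact there exist u, v ∈ G with (B2⁻¹ * B1⁻¹ * B0 * B1 * B2) * C * B0 * B1 * B2 * C = u * v * u⁻¹ * v⁻¹. -/

import Mathlib

/-!
Matsumoto's relation rewrites the element as `B2⁻¹ * B1⁻¹ * d1 * d2`. Moving `B1⁻¹` past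
`d1` and writing `B1 = φ d1 φ⁻¹`, `d2 = φ B2 φ⁻¹` exhibits it as the commutator
`⁅B2⁻¹ * d1, φ⁆`.
-/

open scoped commutatorElement

theorem commutatorElement_inv_mul_eq {G : Type*} [Group G] (a d φ : G) :
    ⁅a⁻¹ * d, φ⁆ = a⁻¹ * d * (φ * d * φ⁻¹)⁻¹ * (φ * a * φ⁻¹) := by
  rw [commutatorElement_def]
  group

theorem stmt_4 {G : Type*} [Group G] (B0 B1 B2 C d1 d2 φ : G)
    (hrel : d1 * d2 = (B0 * B1 * B2 * C) ^ 2)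
    (hcomm : d1 * B1 = B1 * d1)
    (h1 : φ * d1 * φ⁻¹ = B1) (h2 : φ * B2 * φ⁻¹ = d2) :
    (B2⁻¹ * B1⁻¹ * B0 * B1 * B2) * C * B0 * B1 * B2 * C ∈
      commutator G ∧
    ∃ u v : G,
      (B2⁻¹ * B1⁻¹ * B0 * B1 * B2) * C * B0 * B1 * B2 * C =
        u * v * u⁻¹ * v⁻¹ := by
  have hB1_inv : B1⁻¹ * d1 = d1 * B1⁻¹ := (Commute.inv_left (Commute.symm hcomm)).eq
  have hcommutator :
      (B2⁻¹ * B1⁻¹ * B0 * B1 * B2) * C * B0 * B1 * B2 * C = ⁅B2⁻¹ * d1, φ⁆ :=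
    calc (B2⁻¹ * B1⁻¹ * B0 * B1 * B2) * C * B0 * B1 * B2 * C
        = B2⁻¹ * B1⁻¹ * (d1 * d2) := by rw [hrel, sq]; group
      _ = B2⁻¹ * d1 * B1⁻¹ * d2 := by rw [mul_assoc, ← mul_assoc B1⁻¹, hB1_inv]; group
      _ = ⁅B2⁻¹ * d1, φ⁆ := by rw [commutatorElement_inv_mul_eq, h1, h2]
  refine ⟨?_, B2⁻¹ * d1, φ, hcommutator⟩
  rw [hcommutator]
  exact Subgroup.commutator_mem_commutator (Subgroup.mem_top _) (Subgroup.mem_top _)
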